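/- Let a,b>0, p>6, λ>0, h≥0 a potential. If u∈ℋ_λ with u⁺≢0 and u⁻≢0, then there exists a unique pair (s_u,t_u)∈(0,∞)×(0,∞) such that s_u·u⁺+t_u·u⁻∈M_λ, i.e. (J′_λ(s_uu⁺+t_uu⁻),s_uu⁺)=0 and (J′_λ(s_uu⁺+t_uu⁻),t_uu⁻)=0. -/

import Mathlib

open scoped BigOperators
open Filter

namespace DiscreteKirchhoff

/-- Vertices of the lattice graph ℤ³. -/
abbrev V := Fin 3 → ℤ

/-- Adjacency on ℤ³: x ∼ y iff ∑ᵢ |xᵢ - yᵢ| = 1. -/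
def adj (x y : V) : Prop := (∑ i, |x i - y i|) = 1

instance (x y : V) : Decidable (adj x y) :=
  inferInstanceAs (Decidable ((∑ i, |x i - y i|) = 1))

/-- Graph Laplacian: Δu(x) = ∑_{y∼x} (u(y) - u(x)). -/
noncomputable def lap (u : V → ℝ) (x : V) : ℝ :=
  ∑' y : V, if adj x y then u y - u x else 0

/-- Gradient form: ∇u∇v(x) = (1/2) ∑_{y∼x} (u(y)-u(x))(v(y)-v(x)). -/
noncomputable def gradForm (u v : V → ℝ) (x : V) : ℝ :=
  (1/2) * ∑' y : V, if adj x y then (u y - u x) * (v y - v x) else 0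

/-- |∇u|²(x). -/
noncomputable def gradSq (u : V → ℝ) (x : V) : ℝ := gradForm u u x

/-- Positive part u⁺ = max(u,0). -/
noncomputable def pos (u : V → ℝ) : V → ℝ := fun x => max (u x) 0

/-- Negative part u⁻ = min(u,0). -/
noncomputable def neg (u : V → ℝ) : V → ℝ := fun x => min (u x) 0

/-- K_V(u) = ∑_x ∑_{y∼x} [u⁺(x)u⁻(y) + u⁻(x)u⁺(y)]. -/
noncomputable def KV (u : V → ℝ) : ℝ :=
  ∑' x : V, ∑' y : V, if adj x y then pos u x * neg u y + neg u x * pos u y else 0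

/-- |t|^p log t², taken to be 0 at t = 0. -/
noncomputable def logTerm (p t : ℝ) : ℝ :=
  if t = 0 then 0 else |t| ^ p * Real.log (t ^ 2)

/-- |t|^{p-2} t log t², taken to be 0 at t = 0. -/
noncomputable def nlTerm (p t : ℝ) : ℝ :=
  if t = 0 then 0 else |t| ^ (p - 2) * t * Real.log (t ^ 2)

/-- Membership in the space ℋ_λ (independent of λ > 0). -/
def memH (h u : V → ℝ) : Prop :=
  Summable (fun x => gradSq u x + (u x) ^ 2) ∧ Summable (fun x => h x * (u x) ^ 2)

/-- h_λ(x) = λ h(x) + 1. -/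
noncomputable def hl (lam : ℝ) (h : V → ℝ) (x : V) : ℝ := lam * h x + 1

/-- Squared norm in ℋ_λ. -/
noncomputable def normHlamSq (a lam : ℝ) (h u : V → ℝ) : ℝ :=
  ∑' x : V, (a * gradSq u x + hl lam h x * (u x) ^ 2)

/-- Squared H¹ norm. -/
noncomputable def normH1Sq (u : V → ℝ) : ℝ :=
  ∑' x : V, (gradSq u x + (u x) ^ 2)

/-- Inner product in ℋ_λ. -/
noncomputable def innerHlam (a lam : ℝ) (h u v : V → ℝ) : ℝ :=
  ∑' x : V, (a * gradForm u v x + hl lam h x * u x * v x)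

/-- The energy functional J_λ. -/
noncomputable def Jlam (a b p lam : ℝ) (h u : V → ℝ) : ℝ :=
  (1/2) * normHlamSq a lam h u
  + (b/4) * (∑' x : V, gradSq u x) ^ 2
  + (2/p^2) * ∑' x : V, |u x| ^ p
  - (1/p) * ∑' x : V, logTerm p (u x)

/-- The pairing (J′_λ(u), φ). -/
noncomputable def Jp (a b p lam : ℝ) (h u φ : V → ℝ) : ℝ :=
  (∑' x : V, (a * gradForm u φ x + hl lam h x * u x * φ x))
  + b * (∑' x : V, gradSq u x) * (∑' x : V, gradForm u φ x)
  - ∑' x : V, nlTerm p (u x) * φ x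

/-- The Nehari manifold N_λ. -/
def NSet (a b p lam : ℝ) (h : V → ℝ) : Set (V → ℝ) :=
  {u | memH h u ∧ u ≠ 0 ∧ Jp a b p lam h u u = 0}

/-- The sign-changing Nehari set M_λ. -/
def MSet (a b p lam : ℝ) (h : V → ℝ) : Set (V → ℝ) :=
  {u | memH h u ∧ pos u ≠ 0 ∧ neg u ≠ 0 ∧
       Jp a b p lam h u (pos u) = 0 ∧ Jp a b p lam h u (neg u) = 0}

/-- c_λ = inf_{N_λ} J_λ. -/
noncomputable def cLam (a b p lam : ℝ) (h : V → ℝ) : ℝ :=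
  sInf (Jlam a b p lam h '' NSet a b p lam h)

/-- m_λ = inf_{M_λ} J_λ. -/
noncomputable def mLam (a b p lam : ℝ) (h : V → ℝ) : ℝ :=
  sInf (Jlam a b p lam h '' MSet a b p lam h)

/-- Graph-connectedness of a subset of ℤ³. -/
def connectedIn (S : Set V) : Prop :=
  ∀ x ∈ S, ∀ y ∈ S, Relation.ReflTransGen (fun z w => adj z w ∧ w ∈ S) x y

/-- Hypothesis (h₁): h ≥ 0 and Ω = {h = 0} is nonempty, connected and finite. -/
def hypH1 (h : V → ℝ) : Prop :=
  (∀ x, 0 ≤ h x) ∧ {x | h x = 0}.Nonempty ∧ connectedIn {x | h x = 0} ∧ {x | h x = 0}.Finite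

/-- Hypothesis (h₂): the sublevel set {h < M} is finite for some M > 0. -/
def hypH2 (h : V → ℝ) : Prop :=
  ∃ M > 0, {x | h x < M}.Finite

/-- u solves the discrete logarithmic Kirchhoff equation pointwise on ℤ³. -/
def solvesEq (a b p lam : ℝ) (h u : V → ℝ) : Prop :=
  ∀ x : V, -(a + b * ∑' y : V, gradSq u y) * lap u x + hl lam h x * u x = nlTerm p (u x)

/-- Vertex boundary of a subset of ℤ³. -/
def bdry (S : Set V) : Set V := {y | y ∉ S ∧ ∃ x ∈ S, adj x y}

/-- ℋ¹₀(Ω): functions vanishing outside Ω. -/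
def H10 (S : Set V) : Set (V → ℝ) := {u | ∀ x, x ∉ S → u x = 0}

/-- The energy functional J_Ω. -/
noncomputable def JOm (a b p : ℝ) (S : Set V) (u : V → ℝ) : ℝ :=
  (1/2) * ∑' x : V, (S ∪ bdry S).indicator (fun x => a * gradSq u x) x
  + (1/2) * ∑' x : V, S.indicator (fun x => (u x) ^ 2) x
  + (b/4) * (∑' x : V, (S ∪ bdry S).indicator (gradSq u) x) ^ 2
  + (2/p^2) * ∑' x : V, S.indicator (fun x => |u x| ^ p) x
  - (1/p) * ∑' x : V, S.indicator (fun x => logTerm p (u x)) x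

/-- The pairing (J′_Ω(u), φ). -/
noncomputable def JOmp (a b p : ℝ) (S : Set V) (u φ : V → ℝ) : ℝ :=
  (∑' x : V, (S ∪ bdry S).indicator (fun x => a * gradForm u φ x) x)
  + (∑' x : V, S.indicator (fun x => u x * φ x) x)
  + b * (∑' x : V, (S ∪ bdry S).indicator (gradSq u) x)
      * (∑' x : V, (S ∪ bdry S).indicator (gradForm u φ) x)
  - ∑' x : V, S.indicator (fun x => nlTerm p (u x) * φ x) x

/-- The Nehari manifold N_Ω. -/
def NOm (a b p : ℝ) (S : Set V) : Set (V → ℝ) :=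
  {u | u ∈ H10 S ∧ u ≠ 0 ∧ JOmp a b p S u u = 0}

/-- The sign-changing Nehari set M_Ω. -/
def MOm (a b p : ℝ) (S : Set V) : Set (V → ℝ) :=
  {u | u ∈ H10 S ∧ pos u ≠ 0 ∧ neg u ≠ 0 ∧
       JOmp a b p S u (pos u) = 0 ∧ JOmp a b p S u (neg u) = 0}

/-- c_Ω. -/
noncomputable def cOm (a b p : ℝ) (S : Set V) : ℝ :=
  sInf (JOm a b p S '' NOm a b p S)

/-- m_Ω. -/
noncomputable def mOm (a b p : ℝ) (S : Set V) : ℝ :=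
  sInf (JOm a b p S '' MOm a b p S)

/-- u solves the limiting equation pointwise on Ω. -/
def solvesEqOm (a b p : ℝ) (S : Set V) (u : V → ℝ) : Prop :=
  ∀ x ∈ S, -(a + b * ∑' y : V, (S ∪ bdry S).indicator (gradSq u) y) * lap u x + u x
      = nlTerm p (u x)

/-!
Since `u⁺ u⁻ = 0`, the two pairings `(J′_λ(s u⁺ + t u⁻), s u⁺)` and `(J′_λ(s u⁺ + t u⁻), t u⁻)`
are `s ∂ₛΦ` and `t ∂ₜΦ` for `Φ(s, t) = J_λ(s u⁺ + t u⁻)`, an explicit function of two real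
variables whose coefficients are positive or, like the cross term `∑ ∇u⁺∇u⁻`, nonnegative.
Existence: `∂ₛΦ(s, t) > 0` for small `s`, since the term
`-s^(p-1) log s` dominates, and `∂ₛΦ(s, t) < 0` for large `s` and `t ≤ s`, since `p > 4`; so a
maximiser of `Φ` on a large square `[ε, R]²` lies in its interior and is a critical point.
Uniqueness: dividing `∂ₛΦ(s, t) = 0` by `s³` separates a side increasing in `s` from one
decreasing in `s` and increasing in `t / s`; comparing two critical points along the one with the
larger slope `t / s`, in both equations, forces them to agree.
-/

open Set Topology Real

noncomputable def neighbors (x : V) : Finset V := (Finset.Icc (x - 1) (x + 1)).filter (adj x)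

lemma mem_Icc_of_adj {x y : V} (hxy : adj x y) : y ∈ Finset.Icc (x - 1) (x + 1) := by
  have hi : ∀ i, |x i - y i| ≤ 1 := fun i =>
    hxy ▸ Finset.single_le_sum (fun j _ => abs_nonneg (x j - y j)) (Finset.mem_univ i)
  rw [Finset.mem_Icc, Pi.le_def, Pi.le_def]
  constructor <;> intro i <;> have := abs_le.1 (hi i) <;> simp only [Pi.sub_apply,
    Pi.add_apply, Pi.one_apply] <;> linarith

lemma tsum_ite_adj (x : V) (F : V → ℝ) :
    (∑' y, if adj x y then F y else 0) = ∑ y ∈ neighbors x, F y := by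
  rw [neighbors, Finset.sum_filter]
  exact tsum_eq_sum fun y hy => if_neg fun hxy => hy (mem_Icc_of_adj hxy)

lemma gradForm_eq_sum (f g : V → ℝ) (x : V) :
    gradForm f g x = 1 / 2 * ∑ y ∈ neighbors x, (f y - f x) * (g y - g x) := by
  rw [gradForm, tsum_ite_adj]

lemma gradForm_comm (f g : V → ℝ) (x : V) : gradForm f g x = gradForm g f x := by
  simp only [gradForm_eq_sum, mul_comm (f _ - f x)]

lemma gradSq_nonneg (f : V → ℝ) (x : V) : 0 ≤ gradSq f x := by
  rw [gradSq, gradForm_eq_sum]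
  exact mul_nonneg (by norm_num) (Finset.sum_nonneg fun y _ => mul_self_nonneg _)

lemma abs_gradForm_le (f g : V → ℝ) (x : V) :
    |gradForm f g x| ≤ gradSq f x + gradSq g x := by
  simp only [gradSq, gradForm_eq_sum, ← mul_add, ← Finset.sum_add_distrib, abs_mul]
  rw [abs_of_pos (by norm_num : (0 : ℝ) < 1 / 2)]
  gcongr
  refine (Finset.abs_sum_le_sum_abs _ _).trans (Finset.sum_le_sum fun y _ => ?_)
  rw [abs_mul]
  nlinarith [abs_mul_abs_self (f y - f x), abs_mul_abs_self (g y - g x),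
    sq_nonneg (|f y - f x| - |g y - g x|)]

lemma gradSq_comp_le {φ : ℝ → ℝ} (hφ : LipschitzWith 1 φ) (u : V → ℝ) (x : V) :
    gradSq (fun y => φ (u y)) x ≤ gradSq u x := by
  simp only [gradSq, gradForm_eq_sum]
  refine mul_le_mul_of_nonneg_left (Finset.sum_le_sum fun y _ => ?_) (by norm_num)
  have : |φ (u y) - φ (u x)| ≤ |u y - u x| := by
    simpa [Real.dist_eq] using hφ.dist_le_mul (u y) (u x)
  nlinarith [abs_mul_abs_self (φ (u y) - φ (u x)), abs_mul_abs_self (u y - u x),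
    abs_nonneg (φ (u y) - φ (u x))]

lemma pos_mul_neg (u : V → ℝ) (x : V) : pos u x * neg u x = 0 := by
  rcases le_total (u x) 0 with hx | hx
  · simp [pos, hx]
  · simp [neg, hx]

lemma gradForm_pos_neg_nonneg (u : V → ℝ) (x : V) : 0 ≤ gradForm (pos u) (neg u) x := by
  rw [gradForm_eq_sum]
  refine mul_nonneg (by norm_num) (Finset.sum_nonneg fun y _ => ?_)
  have hpx : 0 ≤ pos u x := le_max_right _ _
  have hpy : 0 ≤ pos u y := le_max_right _ _
  have hnx : neg u x ≤ 0 := min_le_right _ _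
  have hny : neg u y ≤ 0 := min_le_right _ _
  nlinarith [pos_mul_neg u x, pos_mul_neg u y, mul_nonneg hpx (neg_nonneg.2 hny),
    mul_nonneg hpy (neg_nonneg.2 hnx)]

lemma gradForm_smul_add_smul (s t : ℝ) (f g : V → ℝ) (x : V) :
    gradForm (fun y => s * f y + t * g y) (fun y => s * f y) x
      = s ^ 2 * gradSq f x + s * t * gradForm f g x := by
  simp only [gradSq, gradForm_eq_sum, Finset.mul_sum, ← Finset.sum_add_distrib]
  exact Finset.sum_congr rfl fun y _ => by ring

lemma gradSq_smul_add_smul (s t : ℝ) (f g : V → ℝ) (x : V) :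
    gradSq (fun y => s * f y + t * g y) x
      = s ^ 2 * gradSq f x + 2 * s * t * gradForm f g x + t ^ 2 * gradSq g x := by
  simp only [gradSq, gradForm_eq_sum, Finset.mul_sum, ← Finset.sum_add_distrib]
  exact Finset.sum_congr rfl fun y _ => by ring

lemma rpow_abs_le_sq {p t : ℝ} (hp : 2 ≤ p) (ht : |t| ≤ 1) : |t| ^ p ≤ t ^ 2 := by
  calc |t| ^ p ≤ |t| ^ (2 : ℝ) := rpow_le_rpow_of_exponent_ge' (abs_nonneg t) ht (by norm_num) hp
    _ = t ^ 2 := by rw [rpow_two, sq_abs]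

lemma abs_logTerm_le {p t : ℝ} (hp : 3 ≤ p) (ht : |t| ≤ 1) : |logTerm p t| ≤ 2 * t ^ 2 := by
  by_cases ht0 : t = 0
  · simp [logTerm, ht0]
  have hpos : 0 < |t| := abs_pos.2 ht0
  -- `|log |t| * |t|| < 1` on `(0, 1]` trades the logarithm for one power of `|t|`
  have hlog := (abs_log_mul_self_lt |t| hpos ht).le
  have hsplit : |t| ^ p = |t| ^ (p - 1) * |t| := by
    rw [rpow_sub_one hpos.ne', div_mul_cancel₀ _ hpos.ne']
  have hpow : |t| ^ (p - 1) ≤ t ^ 2 := rpow_abs_le_sq (by linarith) ht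
  have hval : logTerm p t = 2 * |t| ^ (p - 1) * (log |t| * |t|) := by
    rw [logTerm, if_neg ht0, ← sq_abs, log_pow, hsplit]
    push_cast
    ring
  rw [hval, abs_mul, abs_of_nonneg (by positivity : (0 : ℝ) ≤ 2 * |t| ^ (p - 1))]
  calc 2 * |t| ^ (p - 1) * abs (log |t| * |t|) ≤ 2 * |t| ^ (p - 1) * 1 := by gcongr
    _ ≤ 2 * t ^ 2 := by linarith

lemma eventually_abs_le_one_of_summable_sq {ι : Type*} {f : ι → ℝ}
    (hf : Summable fun i => f i ^ 2) : ∀ᶠ i in cofinite, |f i| ≤ 1 := by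
  filter_upwards [hf.tendsto_cofinite_zero.eventually (ge_mem_nhds one_pos)] with i hi
  exact (sq_le_one_iff_abs_le_one _).1 hi

lemma summable_rpow_abs_of_summable_sq {ι : Type*} {f : ι → ℝ} {p : ℝ} (hp : 2 ≤ p)
    (hf : Summable fun i => f i ^ 2) : Summable fun i => |f i| ^ p := by
  refine hf.of_norm_bounded_eventually ?_
  filter_upwards [eventually_abs_le_one_of_summable_sq hf] with i hi
  rw [norm_of_nonneg (rpow_nonneg (abs_nonneg _) _)]
  exact rpow_abs_le_sq hp hi

lemma summable_logTerm_of_summable_sq {ι : Type*} {f : ι → ℝ} {p : ℝ} (hp : 3 ≤ p)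
    (hf : Summable fun i => f i ^ 2) : Summable fun i => logTerm p (f i) := by
  refine (hf.mul_left 2).of_norm_bounded_eventually ?_
  filter_upwards [eventually_abs_le_one_of_summable_sq hf] with i hi
  exact abs_logTerm_le hp hi

lemma nlTerm_mul_self (p t : ℝ) : nlTerm p t * t = logTerm p t := by
  by_cases ht : t = 0
  · simp [nlTerm, logTerm, ht]
  have hpos : 0 < |t| := abs_pos.2 ht
  have hsq : |t| ^ p = |t| ^ (p - 2) * t ^ 2 := by
    rw [← sq_abs, ← rpow_natCast, ← rpow_add hpos]; norm_num
  rw [nlTerm, logTerm, if_neg ht, if_neg ht, hsq]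
  ring

lemma logTerm_mul {p s : ℝ} (hp : p ≠ 0) (hs : 0 < s) (t : ℝ) :
    logTerm p (s * t) = s ^ p * (2 * log s * |t| ^ p + logTerm p t) := by
  by_cases ht : t = 0
  · simp [logTerm, ht, zero_rpow hp]
  rw [logTerm, logTerm, if_neg (mul_ne_zero hs.ne' ht), if_neg ht, abs_mul, abs_of_pos hs,
    mul_rpow hs.le (abs_nonneg t), mul_pow, log_mul (by positivity) (by positivity), log_pow]
  push_cast
  ring

section Summability

variable {h u : V → ℝ}

lemma memH.summable_sq (hu : memH h u) : Summable fun x => u x ^ 2 :=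
  hu.1.of_nonneg_of_le (fun _ => sq_nonneg _) fun x => le_add_of_nonneg_left (gradSq_nonneg u x)

lemma memH.summable_gradSq (hu : memH h u) : Summable (gradSq u) :=
  hu.1.of_nonneg_of_le (gradSq_nonneg u) fun _ => le_add_of_nonneg_right (sq_nonneg _)

lemma memH.summable_gradForm {f : V → ℝ} (hu : memH h u) (hf : memH h f) :
    Summable (gradForm u f) :=
  Summable.of_norm_bounded (hu.summable_gradSq.add hf.summable_gradSq) fun x => by
    simpa only [Real.norm_eq_abs] using abs_gradForm_le u f x

lemma memH.summable_hl_mul_sq (hu : memH h u) (lam : ℝ) :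
    Summable fun x => hl lam h x * u x ^ 2 := by
  simpa only [hl, add_mul, one_mul, mul_assoc] using (hu.2.mul_left lam).add hu.summable_sq

lemma memH.comp {φ : ℝ → ℝ} (hφ : LipschitzWith 1 φ) (hφ0 : φ 0 = 0) (hh : ∀ x, 0 ≤ h x)
    (hu : memH h u) : memH h fun x => φ (u x) := by
  have hsq : ∀ x, φ (u x) ^ 2 ≤ u x ^ 2 := fun x => by
    have := hφ.dist_le_mul (u x) 0
    simp only [NNReal.coe_one, one_mul, hφ0, Real.dist_eq, sub_zero] at this
    exact sq_le_sq.2 this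
  refine ⟨hu.1.of_nonneg_of_le (fun x => add_nonneg (gradSq_nonneg _ x) (sq_nonneg _))
    fun x => add_le_add (gradSq_comp_le hφ u x) (hsq x), hu.2.of_nonneg_of_le
    (fun x => mul_nonneg (hh x) (sq_nonneg _)) fun x => mul_le_mul_of_nonneg_left (hsq x) (hh x)⟩

lemma memH.pos (hh : ∀ x, 0 ≤ h x) (hu : memH h u) : memH h (pos u) :=
  hu.comp (φ := fun r => max r 0) (LipschitzWith.id.max_const 0) (max_self 0) hh

lemma memH.neg (hh : ∀ x, 0 ≤ h x) (hu : memH h u) : memH h (neg u) :=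
  hu.comp (φ := fun r => min r 0) (LipschitzWith.id.min_const 0) (min_self 0) hh

end Summability

lemma exists_lt_of_hasDerivAt_pos {f : ℝ → ℝ} {f' x c : ℝ} (hf : HasDerivAt f f' x)
    (hf' : 0 < f') (hxc : x < c) : ∃ y ∈ Ioo x c, f x < f y := by
  obtain ⟨t, hslope, ht⟩ := ((hf.tendsto_slope_zero_right.eventually (lt_mem_nhds hf')).and
    (Ioo_mem_nhdsGT (sub_pos.2 hxc))).exists
  refine ⟨x + t, ⟨by linarith [ht.1], by linarith [ht.2]⟩, ?_⟩
  have := pos_of_mul_pos_right hslope (inv_pos.2 ht.1).le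
  linarith

lemma exists_lt_of_hasDerivAt_neg {f : ℝ → ℝ} {f' x c : ℝ} (hf : HasDerivAt f f' x)
    (hf' : f' < 0) (hcx : c < x) : ∃ y ∈ Ioo c x, f x < f y := by
  obtain ⟨t, hslope, ht⟩ := ((hf.tendsto_slope_zero_left.eventually (gt_mem_nhds hf')).and
    (Ioo_mem_nhdsLT (sub_neg.2 hcx))).exists
  refine ⟨x + t, ⟨by linarith [ht.1], by linarith [ht.2]⟩, ?_⟩
  have := pos_of_mul_neg_right hslope (inv_lt_zero.2 ht.2).le
  linarith

lemma hasDerivAt_eq_zero_of_isMaxOn_Icc {f f' : ℝ → ℝ} {a b x : ℝ}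
    (hf : ∀ y ∈ Icc a b, HasDerivAt f (f' y) y) (ha : 0 < f' a) (hb : f' b < 0)
    (hx : x ∈ Icc a b) (hmax : IsMaxOn f (Icc a b) x) : f' x = 0 := by
  have hab : a < b := by
    rcases (hx.1.trans hx.2).lt_or_eq with h | rfl
    · exact h
    · linarith
  have hxa : a < x := by
    refine hx.1.lt_of_ne fun hax => ?_
    subst hax
    obtain ⟨y, hy, hlt⟩ := exists_lt_of_hasDerivAt_pos (hf a hx) ha hab
    exact (hmax ⟨hy.1.le, hy.2.le⟩).not_gt hlt
  have hxb : x < b := by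
    refine hx.2.lt_of_ne fun hxb => ?_
    subst hxb
    obtain ⟨y, hy, hlt⟩ := exists_lt_of_hasDerivAt_neg (hf x hx) hb hab
    exact (hmax ⟨hy.1.le, hy.2.le⟩).not_gt hlt
  exact (hmax.localize.isLocalMax (Icc_mem_nhds hxa hxb)).hasDerivAt_eq_zero (hf x hx)

structure PartCoeffs where
  α : ℝ
  A : ℝ
  B : ℝ
  g : ℝ

structure PartCoeffs.Admissible (S : PartCoeffs) : Prop where
  α_pos : 0 < S.α
  A_pos : 0 < S.A
  g_nonneg : 0 ≤ S.g

noncomputable def partCoeffs (a lam p : ℝ) (h f : V → ℝ) : PartCoeffs where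
  α := normHlamSq a lam h f
  A := ∑' x, |f x| ^ p
  B := ∑' x, logTerm p (f x)
  g := ∑' x, gradSq f x

noncomputable def logPotential (p A B s : ℝ) : ℝ :=
  (2 * A / p ^ 2 - (2 * A * log s + B) / p) * s ^ p

lemma hasDerivAt_logPotential {p A B s : ℝ} (hp : p ≠ 0) (hs : 0 < s) :
    HasDerivAt (logPotential p A B) (-(s ^ (p - 1) * (2 * A * log s + B))) s := by
  have hpow := hasDerivAt_rpow_const (p := p) (Or.inl hs.ne')
  have := ((((hasDerivAt_log hs.ne').const_mul (2 * A)).add_const B).div_const p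
    |>.const_sub (2 * A / p ^ 2)).mul hpow
  refine this.congr_deriv ?_
  rw [rpow_sub_one hs.ne']
  field_simp
  ring

section Fiber

variable (b p γ c : ℝ) (S T : PartCoeffs)

/-- For `f`, `g` of disjoint supports, `S = partCoeffs a lam p h f`, `T = partCoeffs a lam p h g`,
`γ = ∑ ∇f∇g` and `c = a γ`, this is `J_λ(s f + t g)`. -/
noncomputable def fiberEnergy (s t : ℝ) : ℝ :=
  s ^ 2 * S.α / 2 + t ^ 2 * T.α / 2 + s * t * c
    + b / 4 * (s ^ 2 * S.g + 2 * s * t * γ + t ^ 2 * T.g) ^ 2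
    + logPotential p S.A S.B s + logPotential p T.A T.B t

noncomputable def fiberDeriv (s t : ℝ) : ℝ :=
  s * S.α + t * c + b * (s ^ 2 * S.g + 2 * s * t * γ + t ^ 2 * T.g) * (s * S.g + t * γ)
    - s ^ (p - 1) * (2 * S.A * log s + S.B)

lemma fiberEnergy_comm (s t : ℝ) : fiberEnergy b p γ c S T s t = fiberEnergy b p γ c T S t s := by
  unfold fiberEnergy; ring

variable {b p γ c S T}

lemma hasDerivAt_fiberEnergy (hp : p ≠ 0) (t : ℝ) {s : ℝ} (hs : 0 < s) :
    HasDerivAt (fun σ => fiberEnergy b p γ c S T σ t) (fiberDeriv b p γ c S T s t) s := by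
  have hQ := ((((hasDerivAt_pow 2 s).mul_const S.g).add
    (((hasDerivAt_id s).const_mul (2 : ℝ)).mul_const (t * γ))).add_const (t ^ 2 * T.g)).pow 2
  have := ((((((hasDerivAt_pow 2 s).mul_const S.α).div_const 2).add_const (t ^ 2 * T.α / 2)).add
    ((hasDerivAt_id s).mul_const (t * c))).add (hQ.const_mul (b / 4))).add
    (hasDerivAt_logPotential (A := S.A) (B := S.B) hp hs) |>.add_const (logPotential p T.A T.B t)
  refine (this.congr_deriv ?_).congr_of_eventuallyEq (.of_forall fun σ => ?_)
  · simp only [fiberDeriv, Pi.add_apply, id]; ring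
  · simp only [fiberEnergy, Pi.add_apply, Pi.pow_apply, id]; ring

lemma continuousOn_fiberEnergy (hp : p ≠ 0) :
    ContinuousOn (fun z : ℝ × ℝ => fiberEnergy b p γ c S T z.1 z.2) {z | 0 < z.1 ∧ 0 < z.2} := by
  rintro z ⟨hz₁, hz₂⟩
  have h₁ : ContinuousAt (fun z : ℝ × ℝ => logPotential p S.A S.B z.1) z :=
    (hasDerivAt_logPotential hp hz₁).continuousAt.comp continuousAt_fst
  have h₂ : ContinuousAt (fun z : ℝ × ℝ => logPotential p T.A T.B z.2) z :=
    (hasDerivAt_logPotential hp hz₂).continuousAt.comp continuousAt_snd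
  unfold fiberEnergy
  fun_prop

lemma fiberDeriv_pos (hb : 0 ≤ b) (hγ : 0 ≤ γ) (hc : 0 ≤ c) (hS : S.Admissible)
    (hT : 0 ≤ T.g) {s t : ℝ} (hs : 0 < s) (ht : 0 ≤ t) (hlog : 2 * S.A * log s + S.B ≤ 0) :
    0 < fiberDeriv b p γ c S T s t := by
  have hK : 0 ≤ s ^ 2 * S.g + 2 * s * t * γ + t ^ 2 * T.g := by
    have := mul_nonneg (mul_nonneg hs.le ht) hγ
    have := mul_nonneg (sq_nonneg s) hS.g_nonneg
    have := mul_nonneg (sq_nonneg t) hT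
    linarith
  have hL : 0 ≤ s * S.g + t * γ :=
    add_nonneg (mul_nonneg hs.le hS.g_nonneg) (mul_nonneg ht hγ)
  have := mul_nonneg (mul_nonneg hb hK) hL
  have := mul_nonpos_of_nonneg_of_nonpos (rpow_nonneg hs.le (p - 1)) hlog
  have := mul_pos hs hS.α_pos
  have := mul_nonneg ht hc
  unfold fiberDeriv
  linarith

lemma eventually_fiberDeriv_pos (hb : 0 ≤ b) (hγ : 0 ≤ γ) (hc : 0 ≤ c) (hS : S.Admissible)
    (hT : 0 ≤ T.g) : ∀ᶠ s in 𝓝[>] 0, ∀ t, 0 ≤ t → 0 < fiberDeriv b p γ c S T s t := by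
  have hlog : Tendsto (fun s => 2 * S.A * log s + S.B) (𝓝[>] 0) atBot :=
    tendsto_atBot_add_const_right _ _
      (tendsto_log_nhdsGT_zero.const_mul_atBot (by linarith [hS.A_pos]))
  filter_upwards [self_mem_nhdsWithin, hlog.eventually_le_atBot 0] with s hs hs' t ht
  exact fiberDeriv_pos hb hγ hc hS hT hs ht hs'

lemma rpow_sub_one_eq_pow_three_mul {s : ℝ} (hs : 0 < s) (p : ℝ) :
    s ^ (p - 1) = s ^ 3 * s ^ (p - 4) := by
  rw [← rpow_natCast, ← rpow_add hs]
  congr 1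
  push_cast
  ring

lemma fiberDeriv_le (hb : 0 ≤ b) (hγ : 0 ≤ γ) (hc : 0 ≤ c) (hS : S.Admissible)
    (hT : 0 ≤ T.g) {s t : ℝ} (hs : 1 ≤ s) (ht : t ∈ Icc 0 s) :
    fiberDeriv b p γ c S T s t ≤ s ^ 3 * (S.α + c + b * (S.g + 2 * γ + T.g) * (S.g + γ)
      - s ^ (p - 4) * (2 * S.A * log s + S.B)) := by
  obtain ⟨ht0, hts⟩ := ht
  have hs0 : 0 < s := by linarith
  have hs3 : s ≤ s ^ 3 := le_self_pow₀ hs (by norm_num)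
  have hK : s ^ 2 * S.g + 2 * s * t * γ + t ^ 2 * T.g ≤ s ^ 2 * (S.g + 2 * γ + T.g) := by
    have := mul_le_mul_of_nonneg_right (mul_le_mul_of_nonneg_left hts hs0.le) hγ
    have := mul_le_mul_of_nonneg_right (pow_le_pow_left₀ ht0 hts 2) hT
    nlinarith
  have hL : s * S.g + t * γ ≤ s * (S.g + γ) := by
    nlinarith [mul_le_mul_of_nonneg_right hts hγ]
  have hKL := mul_le_mul hK hL (add_nonneg (mul_nonneg hs0.le hS.g_nonneg) (mul_nonneg ht0 hγ))
    (mul_nonneg (sq_nonneg s) (by linarith [hS.g_nonneg]))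
  have := mul_le_mul_of_nonneg_left hKL hb
  have := mul_le_mul_of_nonneg_right hs3 hS.α_pos.le
  have := mul_le_mul_of_nonneg_right (hts.trans hs3) hc
  rw [fiberDeriv, rpow_sub_one_eq_pow_three_mul hs0]
  nlinarith

lemma eventually_fiberDeriv_neg (hb : 0 ≤ b) (hp : 4 < p) (hγ : 0 ≤ γ) (hc : 0 ≤ c)
    (hS : S.Admissible) (hT : 0 ≤ T.g) :
    ∀ᶠ s in atTop, ∀ t ∈ Icc 0 s, fiberDeriv b p γ c S T s t < 0 := by
  have hlog : Tendsto (fun s => 2 * S.A * log s + S.B) atTop atTop :=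
    tendsto_atTop_add_const_right _ _
      (tendsto_log_atTop.const_mul_atTop (by linarith [hS.A_pos]))
  have hgrowth := (tendsto_rpow_atTop (by linarith : 0 < p - 4)).atTop_mul_atTop₀ hlog
  filter_upwards [eventually_ge_atTop 1, hgrowth.eventually_gt_atTop
    (S.α + c + b * (S.g + 2 * γ + T.g) * (S.g + γ))] with s hs hsC t ht
  exact (fiberDeriv_le hb hγ hc hS hT hs ht).trans_lt
    (mul_neg_of_pos_of_neg (by positivity) (by linarith))

lemma fiberDeriv_eq_zero_iff {s : ℝ} (hs : 0 < s) (t : ℝ) :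
    fiberDeriv b p γ c S T s t = 0 ↔
      s ^ (p - 4) * (2 * S.A * log s + S.B) = S.α / s ^ 2 + t / s * c / s ^ 2
        + b * (S.g + 2 * (t / s) * γ + (t / s) ^ 2 * T.g) * (S.g + t / s * γ) := by
  have key : fiberDeriv b p γ c S T s t = s ^ 3 * (S.α / s ^ 2 + t / s * c / s ^ 2
      + b * (S.g + 2 * (t / s) * γ + (t / s) ^ 2 * T.g) * (S.g + t / s * γ)
      - s ^ (p - 4) * (2 * S.A * log s + S.B)) := by
    rw [fiberDeriv, rpow_sub_one_eq_pow_three_mul hs]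
    field_simp
  rw [key, mul_eq_zero, sub_eq_zero, eq_comm (a := s ^ (p - 4) * _)]
  simp [hs.ne']

/-- In the form of `fiberDeriv_eq_zero_iff`, the left side increases in `s` wherever it is
positive, while the right side decreases in `s` and increases in the slope `t / s`. -/
lemma le_of_fiberDeriv_eq_zero (hb : 0 ≤ b) (hp : 4 < p) (hγ : 0 ≤ γ) (hc : 0 ≤ c)
    (hS : S.Admissible) (hT : 0 ≤ T.g) {s₁ t₁ s₂ t₂ : ℝ} (hs₁ : 0 < s₁) (hs₂ : 0 < s₂)
    (ht₂ : 0 ≤ t₂) (h₁ : fiberDeriv b p γ c S T s₁ t₁ = 0)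
    (h₂ : fiberDeriv b p γ c S T s₂ t₂ = 0) (hr : t₂ * s₁ ≤ t₁ * s₂) : s₂ ≤ s₁ := by
  by_contra! hlt
  rw [fiberDeriv_eq_zero_iff hs₁] at h₁
  rw [fiberDeriv_eq_zero_iff hs₂] at h₂
  have hr₂ : 0 ≤ t₂ / s₂ := div_nonneg ht₂ hs₂.le
  have hslope : t₂ / s₂ ≤ t₁ / s₁ := by rw [div_le_div_iff₀ hs₂ hs₁]; linarith
  have hS' := hS.g_nonneg
  have hRHS : S.α / s₂ ^ 2 + t₂ / s₂ * c / s₂ ^ 2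
        + b * (S.g + 2 * (t₂ / s₂) * γ + (t₂ / s₂) ^ 2 * T.g) * (S.g + t₂ / s₂ * γ)
      < S.α / s₁ ^ 2 + t₁ / s₁ * c / s₁ ^ 2
        + b * (S.g + 2 * (t₁ / s₁) * γ + (t₁ / s₁) ^ 2 * T.g) * (S.g + t₁ / s₁ * γ) := by
    have := hS.α_pos
    have hr₁ : 0 ≤ t₁ / s₁ := hr₂.trans hslope
    refine add_lt_add_of_lt_of_le (add_lt_add_of_lt_of_le ?_ ?_) ?_
    · gcongr
    · gcongr
    · gcongr
  have hβ₁ : 0 < 2 * S.A * log s₁ + S.B := by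
    refine pos_of_mul_pos_right (h₁ ▸ lt_of_le_of_lt ?_ hRHS) (rpow_nonneg hs₁.le _)
    have hK : 0 ≤ S.g + 2 * (t₂ / s₂) * γ + (t₂ / s₂) ^ 2 * T.g := by
      have := mul_nonneg hr₂ hγ
      have := mul_nonneg (sq_nonneg (t₂ / s₂)) hT
      linarith
    have := mul_nonneg (mul_nonneg hb hK) (add_nonneg hS' (mul_nonneg hr₂ hγ))
    have := div_nonneg hS.α_pos.le (sq_nonneg s₂)
    have := div_nonneg (mul_nonneg hr₂ hc) (sq_nonneg s₂)
    linarith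
  have hM : s₁ ^ (p - 4) * (2 * S.A * log s₁ + S.B) < s₂ ^ (p - 4) * (2 * S.A * log s₂ + S.B) := by
    have := log_lt_log hs₁ hlt
    have := hS.A_pos
    refine mul_lt_mul (rpow_lt_rpow hs₁.le hlt (by linarith)) (by nlinarith) hβ₁ (by positivity)
  linarith

lemma eq_of_fiberDeriv_eq_zero (hb : 0 ≤ b) (hp : 4 < p) (hγ : 0 ≤ γ) (hc : 0 ≤ c)
    (hS : S.Admissible) (hT : T.Admissible) {s₁ t₁ s₂ t₂ : ℝ} (hs₁ : 0 < s₁) (ht₁ : 0 < t₁)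
    (hs₂ : 0 < s₂) (ht₂ : 0 < t₂)
    (h₁ : fiberDeriv b p γ c S T s₁ t₁ = 0) (h₁' : fiberDeriv b p γ c T S t₁ s₁ = 0)
    (h₂ : fiberDeriv b p γ c S T s₂ t₂ = 0) (h₂' : fiberDeriv b p γ c T S t₂ s₂ = 0)
    (hr : t₂ * s₁ ≤ t₁ * s₂) : s₁ = s₂ ∧ t₁ = t₂ := by
  have hs : s₂ ≤ s₁ :=
    le_of_fiberDeriv_eq_zero hb hp hγ hc hS hT.g_nonneg hs₁ hs₂ ht₂.le h₁ h₂ hr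
  have ht : t₁ ≤ t₂ :=
    le_of_fiberDeriv_eq_zero hb hp hγ hc hT hS.g_nonneg ht₂ ht₁ hs₁.le h₂' h₁' (by linarith)
  have hr' : t₁ * s₂ ≤ t₂ * s₁ := mul_le_mul ht hs hs₂.le ht₂.le
  have hs' : s₁ ≤ s₂ :=
    le_of_fiberDeriv_eq_zero hb hp hγ hc hS hT.g_nonneg hs₂ hs₁ ht₁.le h₂ h₁ hr'
  have ht' : t₂ ≤ t₁ :=
    le_of_fiberDeriv_eq_zero hb hp hγ hc hT hS.g_nonneg ht₁ ht₂ hs₂.le h₁' h₂' (by linarith)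
  exact ⟨le_antisymm hs' hs, le_antisymm ht ht'⟩

lemma fiberDeriv_eq_zero_of_isMaxOn (hp : p ≠ 0) {ε R : ℝ} (hε : 0 < ε)
    (hleft : ∀ t, 0 ≤ t → 0 < fiberDeriv b p γ c S T ε t)
    (hright : ∀ t ∈ Icc 0 R, fiberDeriv b p γ c S T R t < 0) {z : ℝ × ℝ}
    (hz : z ∈ Icc ε R ×ˢ Icc ε R)
    (hmax : IsMaxOn (fun z => fiberEnergy b p γ c S T z.1 z.2) (Icc ε R ×ˢ Icc ε R) z) :
    fiberDeriv b p γ c S T z.1 z.2 = 0 := by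
  have ht : 0 ≤ z.2 := hε.le.trans hz.2.1
  refine hasDerivAt_eq_zero_of_isMaxOn_Icc (f := fun σ => fiberEnergy b p γ c S T σ z.2)
    (f' := fun σ => fiberDeriv b p γ c S T σ z.2)
    (fun σ hσ => hasDerivAt_fiberEnergy hp z.2 (hε.trans_le hσ.1)) (hleft _ ht)
    (hright _ ⟨ht, hz.2.2⟩) hz.1 (isMaxOn_iff.2 fun σ hσ => ?_)
  exact isMaxOn_iff.1 hmax (σ, z.2) ⟨hσ, hz.2⟩

lemma exists_fiberDeriv_eq_zero (hb : 0 ≤ b) (hp : 4 < p) (hγ : 0 ≤ γ) (hc : 0 ≤ c)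
    (hS : S.Admissible) (hT : T.Admissible) :
    ∃ s t, 0 < s ∧ 0 < t ∧
      fiberDeriv b p γ c S T s t = 0 ∧ fiberDeriv b p γ c T S t s = 0 := by
  have hp0 : p ≠ 0 := by linarith
  obtain ⟨ε, hε, hεS, hεT⟩ := ((eventually_mem_nhdsWithin (s := Ioi (0 : ℝ)) (a := 0)).and
    ((eventually_fiberDeriv_pos (p := p) hb hγ hc hS hT.g_nonneg).and
      (eventually_fiberDeriv_pos (p := p) hb hγ hc hT hS.g_nonneg))).exists
  obtain ⟨R, hRS, hRT, hεR⟩ := ((eventually_fiberDeriv_neg hb hp hγ hc hS hT.g_nonneg).and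
    ((eventually_fiberDeriv_neg hb hp hγ hc hT hS.g_nonneg).and (eventually_gt_atTop ε))).exists
  have hne : (Icc ε R ×ˢ Icc ε R).Nonempty := ⟨(ε, ε), ⟨le_rfl, hεR.le⟩, ⟨le_rfl, hεR.le⟩⟩
  have hcont : ContinuousOn (fun w : ℝ × ℝ => fiberEnergy b p γ c S T w.1 w.2)
      (Icc ε R ×ˢ Icc ε R) :=
    (continuousOn_fiberEnergy hp0).mono fun w hw => ⟨hε.trans_le hw.1.1, hε.trans_le hw.2.1⟩
  obtain ⟨z, hz, hmax⟩ := (isCompact_Icc.prod isCompact_Icc).exists_isMaxOn hne hcont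
  have hmax' : IsMaxOn (fun w => fiberEnergy b p γ c T S w.1 w.2) (Icc ε R ×ˢ Icc ε R) z.swap :=
    isMaxOn_iff.2 fun w hw => by
      simpa only [Prod.fst_swap, Prod.snd_swap, fiberEnergy_comm b p γ c S T]
        using isMaxOn_iff.1 hmax w.swap ⟨hw.2, hw.1⟩
  have h1 := fiberDeriv_eq_zero_of_isMaxOn hp0 hε hεS hRS hz hmax
  have h2 : fiberDeriv b p γ c T S z.2 z.1 = 0 :=
    fiberDeriv_eq_zero_of_isMaxOn hp0 hε hεT hRT (z := z.swap) ⟨hz.2, hz.1⟩ hmax'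
  exact ⟨z.1, z.2, hε.trans_le hz.1.1, hε.trans_le hz.2.1, h1, h2⟩

theorem existsUnique_fiberDeriv_eq_zero (hb : 0 ≤ b) (hp : 4 < p) (hγ : 0 ≤ γ) (hc : 0 ≤ c)
    (hS : S.Admissible) (hT : T.Admissible) :
    ∃! st : ℝ × ℝ, 0 < st.1 ∧ 0 < st.2 ∧
      fiberDeriv b p γ c S T st.1 st.2 = 0 ∧ fiberDeriv b p γ c T S st.2 st.1 = 0 := by
  obtain ⟨s, t, hs, ht, h, h'⟩ := exists_fiberDeriv_eq_zero hb hp hγ hc hS hT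
  refine ⟨(s, t), ⟨hs, ht, h, h'⟩, ?_⟩
  rintro ⟨s', t'⟩ ⟨hs', ht', h₂, h₂'⟩
  rcases le_total (t' * s) (t * s') with hr | hr
  · obtain ⟨rfl, rfl⟩ := eq_of_fiberDeriv_eq_zero hb hp hγ hc hS hT hs ht hs' ht' h h' h₂ h₂' hr
    rfl
  · obtain ⟨rfl, rfl⟩ := eq_of_fiberDeriv_eq_zero hb hp hγ hc hS hT hs' ht' hs ht h₂ h₂' h h' hr
    rfl

end Fiber

section Coefficients

variable {a b lam p : ℝ} {h f g : V → ℝ}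

lemma partCoeffs_admissible (ha : 0 ≤ a) (hlam : 0 ≤ lam) (hh : ∀ x, 0 ≤ h x) (hp : 2 ≤ p)
    (hf : memH h f) (hf0 : f ≠ 0) : (partCoeffs a lam p h f).Admissible := by
  obtain ⟨x₀, hx₀⟩ := Function.ne_iff.1 hf0
  have hhl : ∀ x, 0 < hl lam h x := fun x => by
    have := mul_nonneg hlam (hh x)
    rw [hl]; linarith
  have hfx₀ : 0 < f x₀ ^ 2 := pow_two_pos_of_ne_zero hx₀
  refine ⟨?_, ?_, tsum_nonneg (gradSq_nonneg f)⟩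
  · refine ((hf.summable_gradSq.mul_left a).add (hf.summable_hl_mul_sq lam)).tsum_pos
      (fun x => add_nonneg (mul_nonneg ha (gradSq_nonneg f x))
        (mul_nonneg (hhl x).le (sq_nonneg _))) x₀ ?_
    exact add_pos_of_nonneg_of_pos (mul_nonneg ha (gradSq_nonneg f x₀)) (mul_pos (hhl x₀) hfx₀)
  · exact (summable_rpow_abs_of_summable_sq hp hf.summable_sq).tsum_pos
      (fun x => rpow_nonneg (abs_nonneg _) p) x₀ (rpow_pos_of_pos (abs_pos.2 hx₀) p)

lemma tsum_nlTerm_smul_add_smul (hp : 3 ≤ p) (hf : memH h f) (hfg : ∀ x, f x * g x = 0)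
    {s : ℝ} (hs : 0 < s) (t : ℝ) :
    ∑' x, nlTerm p (s * f x + t * g x) * (s * f x)
      = s ^ p * (2 * log s * (∑' x, |f x| ^ p) + ∑' x, logTerm p (f x)) := by
  have hp0 : p ≠ 0 := by linarith
  have hA := (summable_rpow_abs_of_summable_sq (p := p) (by linarith) hf.summable_sq).hasSum
  have hB := (summable_logTerm_of_summable_sq hp hf.summable_sq).hasSum
  rw [← (((hA.mul_left (2 * log s)).add hB).mul_left (s ^ p)).tsum_eq]
  refine tsum_congr fun x => ?_
  rcases mul_eq_zero.1 (hfg x) with hf0 | hg0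
  · simp [hf0, logTerm, zero_rpow hp0]
  · rw [hg0, mul_zero, add_zero, nlTerm_mul_self, logTerm_mul hp0 hs]

lemma Jp_smul_add_smul_left (hp : 3 ≤ p) (hf : memH h f) (hg : memH h g)
    (hfg : ∀ x, f x * g x = 0) {s : ℝ} (hs : 0 < s) (t : ℝ) :
    Jp a b p lam h (fun x => s * f x + t * g x) (fun x => s * f x)
      = s * fiberDeriv b p (∑' x, gradForm f g x) (a * ∑' x, gradForm f g x)
          (partCoeffs a lam p h f) (partCoeffs a lam p h g) s t := by
  have hα := ((hf.summable_gradSq.mul_left a).add (hf.summable_hl_mul_sq lam)).hasSum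
  have hγ := (hf.summable_gradForm hg).hasSum
  have hgf := hf.summable_gradSq.hasSum
  have hgg := hg.summable_gradSq.hasSum
  have hquad : ∑' x, (a * gradForm (fun y => s * f y + t * g y) (fun y => s * f y) x
      + hl lam h x * (s * f x + t * g x) * (s * f x))
      = s ^ 2 * normHlamSq a lam h f + s * t * a * ∑' x, gradForm f g x := by
    rw [normHlamSq, ← ((hα.mul_left (s ^ 2)).add (hγ.mul_left (s * t * a))).tsum_eq]
    refine tsum_congr fun x => ?_
    rw [gradForm_smul_add_smul]
    linear_combination (s * t * hl lam h x) * hfg x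
  have hkin : ∑' x, gradSq (fun y => s * f y + t * g y) x
      = s ^ 2 * (∑' x, gradSq f x) + 2 * s * t * (∑' x, gradForm f g x)
        + t ^ 2 * ∑' x, gradSq g x := by
    simp_rw [gradSq_smul_add_smul]
    exact (((hgf.mul_left _).add (hγ.mul_left _)).add (hgg.mul_left _)).tsum_eq
  have hmix : ∑' x, gradForm (fun y => s * f y + t * g y) (fun y => s * f y) x
      = s ^ 2 * (∑' x, gradSq f x) + s * t * ∑' x, gradForm f g x := by
    simp_rw [gradForm_smul_add_smul]
    exact ((hgf.mul_left _).add (hγ.mul_left _)).tsum_eq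
  rw [Jp, hquad, hkin, hmix, tsum_nlTerm_smul_add_smul hp hf hfg hs, fiberDeriv, rpow_sub_one hs.ne']
  simp only [partCoeffs]
  field_simp

lemma Jp_smul_add_smul_right (hp : 3 ≤ p) (hf : memH h f) (hg : memH h g)
    (hfg : ∀ x, f x * g x = 0) (s : ℝ) {t : ℝ} (ht : 0 < t) :
    Jp a b p lam h (fun x => s * f x + t * g x) (fun x => t * g x)
      = t * fiberDeriv b p (∑' x, gradForm f g x) (a * ∑' x, gradForm f g x)
          (partCoeffs a lam p h g) (partCoeffs a lam p h f) t s := by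
  simp_rw [add_comm (s * f _)]
  rw [Jp_smul_add_smul_left hp hg hf (fun x => by rw [mul_comm, hfg]) ht s,
    tsum_congr fun x => gradForm_comm g f x]

end Coefficients

/-- existence and uniqueness of (s_u, t_u) with s_u u⁺ + t_u u⁻ ∈ M_λ. -/
theorem stmt12 (a b p lam : ℝ) (ha : 0 < a) (hb : 0 < b) (hp : 6 < p) (hlam : 0 < lam)
    (h : V → ℝ) (hh : ∀ x, 0 ≤ h x) (u : V → ℝ) (hu : memH h u)
    (hup : pos u ≠ 0) (hun : neg u ≠ 0) :
    ∃! st : ℝ × ℝ, 0 < st.1 ∧ 0 < st.2 ∧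
      Jp a b p lam h (fun x => st.1 * pos u x + st.2 * neg u x)
        (fun x => st.1 * pos u x) = 0 ∧
      Jp a b p lam h (fun x => st.1 * pos u x + st.2 * neg u x)
        (fun x => st.2 * neg u x) = 0 := by
  have hpos := hu.pos hh
  have hneg := hu.neg hh
  have hp2 : (2 : ℝ) ≤ p := by linarith
  have hp3 : (3 : ℝ) ≤ p := by linarith
  have hγ : 0 ≤ ∑' x, gradForm (pos u) (neg u) x := tsum_nonneg (gradForm_pos_neg_nonneg u)
  have hunique := existsUnique_fiberDeriv_eq_zero hb.le (by linarith : (4 : ℝ) < p) hγ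
    (mul_nonneg ha.le hγ) (partCoeffs_admissible ha.le hlam.le hh hp2 hpos hup)
    (partCoeffs_admissible ha.le hlam.le hh hp2 hneg hun)
  refine (existsUnique_congr fun st => and_congr_right fun hs => and_congr_right fun ht => ?_).2
    hunique
  rw [Jp_smul_add_smul_left hp3 hpos hneg (pos_mul_neg u) hs,
    Jp_smul_add_smul_right hp3 hpos hneg (pos_mul_neg u) _ ht, mul_eq_zero, mul_eq_zero,
    or_iff_right hs.ne', or_iff_right ht.ne']

end DiscreteKirchhoff
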